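/- arXiv:math/0501274 — 2 statements merged into one kernel-verified Lean document; each statement's English description precedes it below -/
import Mathlib

section
/- Let F be a distribution function and α > 0. There exist aₙ > 0 and bₙ ∈ ℝ such that F^{⊡n}(aₙ·x + bₙ) → B_α(x) as n → ∞ for every x ∈ ℝ, if and only if there exist aₙ > 0 and bₙ ∈ ℝ such that F(aₙ·x + bₙ)^n → Ψ_α(x) as n → ∞ for every x ∈ ℝ, where Ψ_α(x) = exp(−|x|^α) for x ≤ 0 and Ψ_α(x) = 1 for x > 0. In other words, the free max-domain of attraction of the Beta law B_α coincides with the classical max-domain of attraction of the Weibull distribution Ψ_α. -/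
open Filter Topology

def IsDistFun (F : ℝ → ℝ) : Prop :=
  Monotone F ∧ (∀ x, ContinuousWithinAt F (Set.Ici x) x) ∧
    Tendsto F atBot (𝓝 0) ∧ Tendsto F atTop (𝓝 1)

noncomputable def freePow (F : ℝ → ℝ) (n : ℕ) (x : ℝ) : ℝ :=
  max ((n : ℝ) * F x - ((n : ℝ) - 1)) 0

noncomputable def betaDF (α : ℝ) (x : ℝ) : ℝ :=
  if x ≤ -1 then 0 else if x ≤ 0 then 1 - |x| ^ α else 1

/-- The Weibull distribution function. -/
noncomputable def weibullDF (α : ℝ) (x : ℝ) : ℝ :=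
  if x ≤ 0 then Real.exp (-|x| ^ α) else 1

/-!
Both domains of attraction are characterised by the tail condition
`n (1 - F (aₙ x + bₙ)) → τ(x)`, where `τ(x) = |x| ^ α` for `x ≤ 0` and `τ(x) = 0` for `x > 0`:
on the classical side because `Gₙ ^ n → exp (-c)` iff `n (1 - Gₙ) → c`, on the free side because
`F^{⊡n} = max (1 - n (1 - F)) 0`. Free convergence only yields the tail condition where `B_α > 0`,
that is on `(-1, ∞)`. It extends to `x ≤ -1` by a convergence-of-types argument: the normalisation
at index `n / k` sees `k` times the tail seen at index `n`, so the affine maps relating the two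
normalisations converge to `t ↦ k ^ (1/α) t`, and `aₙ x + bₙ` is asymptotically the point
`k ^ (-1/α) x` of the normalisation at index `n / k`, which lies in `(-1, 0)` once `k > |x| ^ α`,
where the tail is known.
-/

open Set

section AntitoneFamily

variable {ι : Type*} {l : Filter ι} {f : ι → ℝ → ℝ} {G : ℝ → ℝ} {I : Set ℝ} {y : ℝ}
  {s : ι → ℝ}

theorem tendsto_apply_of_antitone (hf : ∀ i, Antitone (f i)) (hI : I ∈ 𝓝 y)
    (hconv : ∀ z ∈ I, Tendsto (fun i => f i z) l (𝓝 (G z))) (hG : ContinuousAt G y)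
    (hs : Tendsto s l (𝓝 y)) : Tendsto (fun i => f i (s i)) l (𝓝 (G y)) := by
  rw [tendsto_order]
  constructor
  · intro c hc
    obtain ⟨z, ⟨hzI, hcz⟩, hyz⟩ := (eventually_nhdsWithin_of_eventually_nhds
      (Filter.Eventually.and hI (hG.eventually (lt_mem_nhds hc)))).and
      (self_mem_nhdsWithin (s := Ioi y)) |>.exists
    filter_upwards [hs.eventually_lt_const hyz, (hconv z hzI).eventually_const_lt hcz]
      with i hiz hci using hci.trans_le (hf i hiz.le)
  · intro c hc
    obtain ⟨z, ⟨hzI, hcz⟩, hzy⟩ := (eventually_nhdsWithin_of_eventually_nhds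
      (Filter.Eventually.and hI (hG.eventually (gt_mem_nhds hc)))).and
      (self_mem_nhdsWithin (s := Iio y)) |>.exists
    filter_upwards [hs.eventually_const_lt hzy, (hconv z hzI).eventually_lt_const hcz]
      with i hzi hic using (hf i hzi.le).trans_lt hic

theorem tendsto_of_tendsto_apply_antitone (hf : ∀ i, Antitone (f i)) (hI : I ∈ 𝓝 y)
    (hconv : ∀ z ∈ I, Tendsto (fun i => f i z) l (𝓝 (G z))) (hG : StrictAntiOn G I)
    (h : Tendsto (fun i => f i (s i)) l (𝓝 (G y))) : Tendsto s l (𝓝 y) := by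
  have hy : y ∈ I := mem_of_mem_nhds hI
  rw [tendsto_order]
  constructor
  · intro c hc
    obtain ⟨z, hzI, hcz, hzy⟩ := ((eventually_nhdsWithin_of_eventually_nhds hI).and
      (Ioo_mem_nhdsLT hc)).exists
    filter_upwards [h.eventually_lt (hconv z hzI) (hG hzI hy hzy)] with i hi
      using hcz.trans ((hf i).reflect_lt hi)
  · intro c hc
    obtain ⟨z, hzI, hyz, hzc⟩ := ((eventually_nhdsWithin_of_eventually_nhds hI).and
      (Ioo_mem_nhdsGT hc)).exists
    filter_upwards [(hconv z hzI).eventually_lt h (hG hy hzI hyz)] with i hi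
      using ((hf i).reflect_lt hi).trans hzc

end AntitoneFamily

theorem tendsto_coeffs_of_tendsto_affine {ι : Type*} {l : Filter ι} {r d : ι → ℝ}
    {r₀ d₀ t₁ t₂ : ℝ} (ht : t₁ ≠ t₂)
    (h₁ : Tendsto (fun i => r i * t₁ + d i) l (𝓝 (r₀ * t₁ + d₀)))
    (h₂ : Tendsto (fun i => r i * t₂ + d i) l (𝓝 (r₀ * t₂ + d₀))) :
    Tendsto r l (𝓝 r₀) ∧ Tendsto d l (𝓝 d₀) := by
  have hr : Tendsto r l (𝓝 r₀) := by
    have ht' : t₁ - t₂ ≠ 0 := sub_ne_zero.2 ht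
    convert (h₁.sub h₂).div_const (t₁ - t₂) using 2 with i <;> field_simp <;> ring
  refine ⟨hr, ?_⟩
  convert h₁.sub (hr.mul_const t₁) using 2 <;> ring

theorem tendsto_nat_mul_comp_div {g : ℕ → ℝ} {L : ℝ} {k : ℕ} (hk : k ≠ 0)
    (h : Tendsto (fun n : ℕ => n * g n) atTop (𝓝 L)) :
    Tendsto (fun n : ℕ => n * g (n / k)) atTop (𝓝 (k * L)) := by
  have hk0 : (0 : ℝ) < k := by positivity
  have hm := Nat.tendsto_div_const_atTop hk
  have hratio : Tendsto (fun n : ℕ => ((n / k : ℕ) : ℝ) / ((n : ℝ) / k)) atTop (𝓝 1) := by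
    simpa only [Function.comp_def, Nat.floor_div_eq_div] using
      tendsto_nat_floor_div_atTop.comp (tendsto_natCast_atTop_atTop.atTop_div_const hk0)
  have := ((h.comp hm).div hratio one_ne_zero).const_mul (k : ℝ)
  rw [div_one] at this
  refine this.congr' ?_
  filter_upwards [hm.eventually_ne_atTop 0] with n hn
  have hn' : (n : ℝ) ≠ 0 := Nat.cast_ne_zero.2 fun h0 => hn (by simp [h0])
  have : ((n / k : ℕ) : ℝ) ≠ 0 := by exact_mod_cast hn
  simp only [Pi.div_apply, Function.comp_apply]
  field_simp

theorem tendsto_pow_iff_tendsto_nat_mul_one_sub {G : ℕ → ℝ} (h0 : ∀ n, 0 ≤ G n) {c : ℝ} :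
    Tendsto (fun n => G n ^ n) atTop (𝓝 (Real.exp (-c))) ↔
      Tendsto (fun n : ℕ => n * (1 - G n)) atTop (𝓝 c) := by
  refine ⟨fun h => ?_, fun h => ?_⟩
  · have hpos : ∀ᶠ n in atTop, 0 < G n := by
      filter_upwards [h.eventually_const_lt (Real.exp_pos (-c)), eventually_ne_atTop 0]
        with n hn hn0
      exact (h0 n).lt_of_ne fun hG => by simp [← hG, hn0] at hn
    have hlog : Tendsto (fun n : ℕ => n * Real.log (G n)) atTop (𝓝 (-c)) := by
      simpa [Function.comp_def, Real.log_pow] using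
        (Real.continuousAt_log (Real.exp_pos _).ne').tendsto.comp h
    have hG1 : Tendsto G atTop (𝓝 1) := by
      have := (hlog.mul tendsto_inv_atTop_nhds_zero_nat).rexp
      rw [mul_zero, Real.exp_zero] at this
      refine this.congr' ?_
      filter_upwards [hpos, eventually_ne_atTop 0] with n hn hn0
      rw [mul_comm, inv_mul_cancel_left₀ (Nat.cast_ne_zero.2 hn0), Real.exp_log hn]
    -- `1 - G⁻¹ ≤ log G ≤ G - 1` squeezes `n (1 - G)` between `-G · n log G` and `-n log G`
    have hlower := hG1.mul hlog.neg
    rw [one_mul, neg_neg] at hlower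
    refine tendsto_of_tendsto_of_tendsto_of_le_of_le' hlower (by simpa using hlog.neg) ?_ ?_
    · filter_upwards [hpos] with n hn
      have := mul_le_mul_of_nonneg_left (Real.one_sub_inv_le_log_of_pos hn) hn.le
      rw [mul_sub, mul_inv_cancel₀ hn.ne', mul_one] at this
      nlinarith [(Nat.cast_nonneg n : (0 : ℝ) ≤ n)]
    · filter_upwards [hpos] with n hn
      nlinarith [Real.log_le_sub_one_of_pos hn, (Nat.cast_nonneg n : (0 : ℝ) ≤ n)]
  · simpa using Real.tendsto_one_add_pow_exp_of_tendsto (g := fun n => G n - 1)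
      (by simpa [mul_sub] using h.neg)

theorem Antitone.nat_mul_comp_affine {U : ℝ → ℝ} (hU : Antitone U) (n : ℕ) {a : ℝ} (ha : 0 < a)
    (b : ℝ) : Antitone fun y => n * U (a * y + b) := fun _ _ hyz =>
  mul_le_mul_of_nonneg_left (hU (by gcongr)) n.cast_nonneg

theorem strictAntiOn_abs_rpow {α : ℝ} (hα : 0 < α) :
    StrictAntiOn (fun y : ℝ => |y| ^ α) (Iic 0) := fun y hy z hz hyz =>
  Real.rpow_lt_rpow (abs_nonneg z)
    (by rw [abs_of_nonpos (mem_Iic.1 hy), abs_of_nonpos (mem_Iic.1 hz)]; linarith) hα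

theorem abs_rpow_inv_mul_rpow {k α : ℝ} (hk : 0 ≤ k) (hα : α ≠ 0) (t : ℝ) :
    |k ^ α⁻¹ * t| ^ α = k * |t| ^ α := by
  rw [abs_mul, abs_of_nonneg (Real.rpow_nonneg hk _),
    Real.mul_rpow (Real.rpow_nonneg hk _) (abs_nonneg t), Real.rpow_inv_rpow hk hα]

section WeibullTail

variable {U : ℝ → ℝ} {a b : ℕ → ℝ} {α : ℝ}

theorem Antitone.tendsto_normalizingConstants_comp_div (hU : Antitone U) (ha : ∀ n, 0 < a n)
    (hα : 0 < α)
    (H : ∀ y ∈ Ioo (-1) 0, Tendsto (fun n : ℕ => n * U (a n * y + b n)) atTop (𝓝 (|y| ^ α)))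
    {k : ℕ} (hk : k ≠ 0) :
    Tendsto (fun n => a (n / k) / a n) atTop (𝓝 ((k : ℝ) ^ α⁻¹)) ∧
      Tendsto (fun n => (b (n / k) - b n) / a n) atTop (𝓝 0) := by
  set K := (k : ℝ) ^ α⁻¹
  have hK1 : 1 ≤ K := Real.one_le_rpow (Nat.one_le_cast.2 (Nat.pos_of_ne_zero hk)) (by positivity)
  have hK : 0 < K := one_pos.trans_le hK1
  have habsK : ∀ t, |K * t| ^ α = k * |t| ^ α := abs_rpow_inv_mul_rpow (Nat.cast_nonneg k) hα.ne'
  set r := fun n => a (n / k) / a n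
  set d := fun n => (b (n / k) - b n) / a n
  have hrd : ∀ n t, a n * (r n * t + d n) + b n = a (n / k) * t + b (n / k) := fun n t => by
    simp only [r, d]; field_simp [(ha n).ne']; ring
  have hloc : ∀ s ∈ Ioo (-1 : ℝ) 0,
      Tendsto (fun n => r n * (s / K) + d n) atTop (𝓝 (K * (s / K) + 0)) := fun s hs => by
    have hsK : s / K ∈ Ioo (-1 : ℝ) 0 :=
      ⟨by rw [lt_div_iff₀ hK]; nlinarith [hs.1, hs.2], div_neg_of_neg_of_pos hs.2 hK⟩
    rw [add_zero, mul_div_cancel₀ s hK.ne']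
    refine tendsto_of_tendsto_apply_antitone (fun n => hU.nat_mul_comp_affine n (ha n) (b n))
      (isOpen_Ioo.mem_nhds hs) H
      ((strictAntiOn_abs_rpow hα).mono (Ioo_subset_Iio_self.trans Iio_subset_Iic_self)) ?_
    simpa only [hrd, ← habsK, mul_div_cancel₀ s hK.ne'] using tendsto_nat_mul_comp_div hk (H _ hsK)
  exact tendsto_coeffs_of_tendsto_affine (t₁ := -1 / 2 / K) (t₂ := -1 / 4 / K)
    (by rw [Ne, div_left_inj' hK.ne']; norm_num) (hloc _ (by norm_num)) (hloc _ (by norm_num))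

theorem Antitone.tendsto_nat_mul_abs_rpow (hU : Antitone U) (ha : ∀ n, 0 < a n) (hα : 0 < α)
    (H : ∀ y ∈ Ioo (-1) 0, Tendsto (fun n : ℕ => n * U (a n * y + b n)) atTop (𝓝 (|y| ^ α)))
    {x : ℝ} (hx : x < 0) : Tendsto (fun n : ℕ => n * U (a n * x + b n)) atTop (𝓝 (|x| ^ α)) := by
  obtain ⟨k, hk⟩ := exists_nat_gt (|x| ^ α)
  have hk0 : (0 : ℝ) < k := (Real.rpow_pos_of_pos (abs_pos.2 hx.ne) α).trans hk
  set K := (k : ℝ) ^ α⁻¹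
  have hK : 0 < K := Real.rpow_pos_of_pos hk0 _
  have habsK := abs_rpow_inv_mul_rpow hk0.le hα.ne'
  have hxK : x / K ∈ Ioo (-1 : ℝ) 0 := by
    refine ⟨?_, div_neg_of_neg_of_pos hx hK⟩
    by_contra! hle
    have : (1 : ℝ) ≤ |x / K| ^ α :=
      Real.one_le_rpow (by rw [abs_of_neg (div_neg_of_neg_of_pos hx hK)]; linarith) hα.le
    rw [← mul_div_cancel₀ x hK.ne', habsK] at hk
    nlinarith
  obtain ⟨hr, hd⟩ := hU.tendsto_normalizingConstants_comp_div ha hα H (Nat.cast_pos.1 hk0).ne'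
  have ht : Tendsto (fun n => (x - (b (n / k) - b n) / a n) / (a (n / k) / a n)) atTop
      (𝓝 ((x - 0) / K)) := (tendsto_const_nhds.sub hd).div hr hK.ne'
  rw [sub_zero] at ht
  have hlim := tendsto_apply_of_antitone (G := fun t => k * |t| ^ α)
    (fun n => hU.nat_mul_comp_affine n (ha (n / k)) (b (n / k))) (isOpen_Ioo.mem_nhds hxK)
    (fun t ht => tendsto_nat_mul_comp_div (Nat.cast_pos.1 hk0).ne' (H t ht))
    (by fun_prop (disch := exact Or.inr hα.le)) ht
  rw [← habsK, mul_div_cancel₀ x hK.ne'] at hlim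
  refine hlim.congr fun n => ?_
  congr 2
  field_simp [(ha n).ne', (ha (n / k)).ne']
  ring

end WeibullTail

theorem IsDistFun.nonneg {F : ℝ → ℝ} (hF : IsDistFun F) (x : ℝ) : 0 ≤ F x :=
  le_of_tendsto hF.2.2.1 (eventually_le_atBot x |>.mono fun _ hy => hF.1 hy)

theorem freePow_eq (F : ℝ → ℝ) (n : ℕ) (x : ℝ) :
    freePow F n x = max (1 - n * (1 - F x)) 0 := by
  rw [freePow]; ring_nf

theorem Filter.Tendsto.freePow {F : ℝ → ℝ} {c : ℕ → ℝ} {t : ℝ}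
    (h : Tendsto (fun n : ℕ => n * (1 - F (c n))) atTop (𝓝 t)) :
    Tendsto (fun n => freePow F n (c n)) atTop (𝓝 (max (1 - t) 0)) := by
  simpa only [freePow_eq] using (tendsto_const_nhds.sub h).max tendsto_const_nhds

theorem tendsto_freePow_iff {F : ℝ → ℝ} {c : ℕ → ℝ} {t : ℝ} (ht : t < 1) :
    Tendsto (fun n => freePow F n (c n)) atTop (𝓝 (max (1 - t) 0)) ↔
      Tendsto (fun n : ℕ => n * (1 - F (c n))) atTop (𝓝 t) := by
  refine ⟨fun h => ?_, Tendsto.freePow⟩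
  rw [max_eq_left (by linarith)] at h
  have := tendsto_const_nhds (x := (1 : ℝ)) |>.sub h
  rw [sub_sub_cancel] at this
  refine this.congr' ?_
  filter_upwards [h.eventually_const_lt (sub_pos.2 ht)] with n hn
  rw [freePow_eq, lt_max_iff, lt_self_iff_false, or_false] at hn
  rw [freePow_eq, max_eq_left hn.le]
  ring

noncomputable def weibullExponent (α x : ℝ) : ℝ :=
  if x ≤ 0 then |x| ^ α else 0

theorem weibullExponent_of_nonpos (α : ℝ) {x : ℝ} (hx : x ≤ 0) :
    weibullExponent α x = |x| ^ α :=
  if_pos hx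

theorem weibullDF_eq_exp (α x : ℝ) : weibullDF α x = Real.exp (-weibullExponent α x) := by
  unfold weibullDF weibullExponent
  split_ifs <;> simp

theorem betaDF_eq_max {α : ℝ} (hα : 0 < α) (x : ℝ) :
    betaDF α x = max (1 - weibullExponent α x) 0 := by
  unfold betaDF weibullExponent
  split_ifs with h₁ h₂ h₃
  · have : 1 ≤ |x| ^ α := Real.one_le_rpow (by rw [abs_of_nonpos h₂]; linarith) hα.le
    simp [this]
  · linarith
  · have : |x| ^ α ≤ 1 :=
      Real.rpow_le_one (abs_nonneg x) (by rw [abs_of_nonpos h₃]; linarith) hα.le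
    simp [this]
  · simp

theorem weibullExponent_lt_one {α : ℝ} (hα : 0 < α) {x : ℝ} (hx : -1 < x) :
    weibullExponent α x < 1 := by
  unfold weibullExponent
  split_ifs
  · exact Real.rpow_lt_one (abs_nonneg x) (abs_lt.2 ⟨hx, by linarith⟩) hα
  · exact one_pos

/-- The free max-domain of attraction of the Beta law `B_α` coincides with
the classical max-domain of attraction of the Weibull law `Ψ_α`. -/
theorem freeDomAttr_beta_iff_classicalDomAttr_weibull
    (F : ℝ → ℝ) (hF : IsDistFun F) (α : ℝ) (hα : 0 < α) :
    (∃ a b : ℕ → ℝ, (∀ n, 0 < a n) ∧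
        ∀ x : ℝ, Tendsto (fun n => freePow F n (a n * x + b n)) atTop
          (𝓝 (betaDF α x))) ↔
      (∃ a b : ℕ → ℝ, (∀ n, 0 < a n) ∧
        ∀ x : ℝ, Tendsto (fun n => F (a n * x + b n) ^ n) atTop
          (𝓝 (weibullDF α x))) := by
  have hpow := fun (a b : ℕ → ℝ) (x c : ℝ) => tendsto_pow_iff_tendsto_nat_mul_one_sub
    (G := fun n => F (a n * x + b n)) (c := c) fun _ => hF.nonneg _
  constructor
  · rintro ⟨a, b, ha, hconv⟩
    have tail : ∀ x, -1 < x → Tendsto (fun n : ℕ => n * (1 - F (a n * x + b n))) atTop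
        (𝓝 (weibullExponent α x)) := fun x hx =>
      (tendsto_freePow_iff (weibullExponent_lt_one hα hx)).1 (betaDF_eq_max hα x ▸ hconv x)
    refine ⟨a, b, ha, fun x => ?_⟩
    rw [weibullDF_eq_exp, hpow]
    rcases lt_or_ge (-1) x with hx | hx
    · exact tail x hx
    · rw [weibullExponent_of_nonpos α (by linarith)]
      refine Antitone.tendsto_nat_mul_abs_rpow (fun _ _ h => sub_le_sub_left (hF.1 h) 1) ha hα
        (fun y hy => ?_) (by linarith)
      simpa only [weibullExponent_of_nonpos α hy.2.le] using tail y hy.1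
  · rintro ⟨a, b, ha, hconv⟩
    refine ⟨a, b, ha, fun x => ?_⟩
    rw [betaDF_eq_max hα]
    exact ((hpow a b x _).1 (weibullDF_eq_exp α x ▸ hconv x)).freePow
end

section
/- For c > 0, define f_c : [0, 1] → [0, 1] by f_c(0) = 0 and f_c(u) = max(1 + c·log u, 0) for 0 < u ≤ 1. Then: (1) for all u, v ∈ [0, 1], f_c(u·v) = max(f_c(u) + f_c(v) − 1, 0), i.e., f_c is a homomorphism from the multiplicative semigroup ([0,1], ·) to the semigroup ([0,1], *) with u * v = max(u + v − 1, 0); and (2) for every distribution function F, every integer n ≥ 1, and every x ∈ ℝ, f_c(F(x)^n) = max(n·f_c(F(x)) − (n−1), 0), i.e., f_c ∘ (F^n) = (f_c ∘ F)^{⊡n} pointwise. -/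
open Filter Topology

/-- The homomorphism `f_c : ([0,1], ·) → ([0,1], *)`, `f_c(u) = (1 + c log u)₊`
for `u > 0` and `f_c(0) = 0`. -/
noncomputable def fc (c : ℝ) (u : ℝ) : ℝ :=
  if u = 0 then 0 else max (1 + c * Real.log u) 0

lemma fc_nonneg (c u : ℝ) : 0 ≤ fc c u := by
  unfold fc; split <;> simp [le_max_right]

lemma fc_le_one (c : ℝ) (hc : 0 < c) {u : ℝ} (hu : u ∈ Set.Icc (0:ℝ) 1) :
    fc c u ≤ 1 := by
  unfold fc
  split_ifs with h
  · norm_num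
  · have hu0 : 0 < u := lt_of_le_of_ne hu.1 (Ne.symm h)
    have hlog : Real.log u ≤ 0 := Real.log_nonpos hu.1 hu.2
    have : c * Real.log u ≤ 0 := mul_nonpos_of_nonneg_of_nonpos hc.le hlog
    have h1 : 1 + c * Real.log u ≤ 1 := by linarith
    exact max_le h1 zero_le_one

lemma fc_hom (c : ℝ) (hc : 0 < c) :
    ∀ u ∈ Set.Icc (0 : ℝ) 1, ∀ v ∈ Set.Icc (0 : ℝ) 1,
      fc c (u * v) = max (fc c u + fc c v - 1) 0 := by
  intro u hu v hv
  have h00 : fc c (0:ℝ) = 0 := by simp [fc]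
  rcases eq_or_lt_of_le hu.1 with h0u | h0u
  · have hv1 := fc_le_one c hc hv
    have hv0 := fc_nonneg c v
    rw [← h0u, zero_mul, h00, zero_add,
      max_eq_right (by linarith : fc c v - 1 ≤ 0)]
  rcases eq_or_lt_of_le hv.1 with h0v | h0v
  · have hu1 := fc_le_one c hc hu
    have hu0 := fc_nonneg c u
    rw [← h0v, mul_zero, h00, add_zero,
      max_eq_right (by linarith : fc c u - 1 ≤ 0)]
  have huv : u * v ≠ 0 := by positivity
  rw [fc, if_neg huv, Real.log_mul (ne_of_gt h0u) (ne_of_gt h0v),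
    fc, if_neg (ne_of_gt h0u), fc, if_neg (ne_of_gt h0v)]
  set a := 1 + c * Real.log u with ha
  set b := 1 + c * Real.log v with hb
  have haa : a ≤ 1 := by
    have : c * Real.log u ≤ 0 :=
      mul_nonpos_of_nonneg_of_nonpos hc.le (Real.log_nonpos hu.1 hu.2)
    simp [ha]; linarith
  have hbb : b ≤ 1 := by
    have : c * Real.log v ≤ 0 :=
      mul_nonpos_of_nonneg_of_nonpos hc.le (Real.log_nonpos hv.1 hv.2)
    simp [hb]; linarith
  have key : 1 + c * (Real.log u + Real.log v) = a + b - 1 := by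
    rw [ha, hb]; ring
  rw [key]
  rcases le_or_gt 0 a with h1 | h1 <;> rcases le_or_gt 0 b with h2 | h2
  · rw [max_eq_left h1, max_eq_left h2]
  · rw [max_eq_left h1, max_eq_right h2.le, max_eq_right (by linarith : a + b - 1 ≤ 0),
      max_eq_right (by linarith : a + 0 - 1 ≤ 0)]
  · rw [max_eq_left h2, max_eq_right h1.le, max_eq_right (by linarith : a + b - 1 ≤ 0),
      max_eq_right (by linarith : 0 + b - 1 ≤ 0)]
  · rw [max_eq_right h1.le, max_eq_right h2.le,
      max_eq_right (by linarith : a + b - 1 ≤ 0),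
      max_eq_right (by linarith : (0:ℝ) + 0 - 1 ≤ 0)]

lemma fc_pow (c : ℝ) (hc : 0 < c) {u : ℝ} (hu : u ∈ Set.Icc (0:ℝ) 1) :
    ∀ n : ℕ, 1 ≤ n → fc c (u ^ n) = max ((n : ℝ) * fc c u - ((n : ℝ) - 1)) 0 := by
  intro n hn
  induction n with
  | zero => omega
  | succ m ih =>
    rcases Nat.eq_or_lt_of_le hn with h1 | h1
    · simp [← h1, max_eq_left (fc_nonneg c u)]
    · have hm : 1 ≤ m := by omega
      have ihm := ih hm
      have hum : u ^ m ∈ Set.Icc (0:ℝ) 1 :=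
        ⟨pow_nonneg hu.1 m, pow_le_one₀ hu.1 hu.2⟩
      rw [pow_succ, fc_hom c hc _ hum _ hu, ihm]
      have ht1 : fc c u ≤ 1 := fc_le_one c hc hu
      set t := fc c u
      push_cast
      rcases le_or_gt 0 ((m : ℝ) * t - ((m : ℝ) - 1)) with h | h
      · rw [max_eq_left h]
        congr 1
        ring
      · rw [max_eq_right h.le, max_eq_right (by linarith : (0:ℝ) + t - 1 ≤ 0),
          max_eq_right (by linarith : ((m : ℝ) + 1) * t - ((m : ℝ) + 1 - 1) ≤ 0)]

/-- `f_c` is a semigroup homomorphism from multiplication to the operation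
`u * v = max (u + v - 1) 0`, and it intertwines classical powers of
distribution functions with free extremal powers. -/
theorem fc_semigroup_hom_and_intertwines (c : ℝ) (hc : 0 < c) :
    (∀ u ∈ Set.Icc (0 : ℝ) 1, ∀ v ∈ Set.Icc (0 : ℝ) 1,
      fc c (u * v) = max (fc c u + fc c v - 1) 0) ∧
    (∀ F : ℝ → ℝ, IsDistFun F → ∀ n : ℕ, 1 ≤ n → ∀ x : ℝ,
      fc c (F x ^ n) = max ((n : ℝ) * fc c (F x) - ((n : ℝ) - 1)) 0) := by
  refine ⟨fc_hom c hc, ?_⟩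
  intro F hF n hn x
  obtain ⟨hmono, -, hbot, htop⟩ := hF
  have h0 : 0 ≤ F x :=
    le_of_tendsto hbot (eventually_atBot.2 ⟨x, fun y hy => hmono hy⟩)
  have h1 : F x ≤ 1 :=
    ge_of_tendsto htop (eventually_atTop.2 ⟨x, fun y hy => hmono hy⟩)
  exact fc_pow c hc ⟨h0, h1⟩ n hn
end
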